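/- arXiv:2410.21078 — 10 statements merged into one kernel-verified Lean document; each statement's English description precedes it below -/
import Mathlib

section
/- Let n be an integer with 9 ≤ n ≤ 11. Then the function g(b) = ((1+2(n-2)a(b))²/(1+2(n-1)a(b))) · ((2+(n-3)b)/(1+(n-2)b)) is strictly increasing on the interval (0, 1/(2n+2)]. -/
/-- The quantity `a(b) = b(2+(n-2)b)² / (2(2+(n-3)b))`. -/
noncomputable def aFun (n : ℕ) (b : ℝ) : ℝ :=
  b * (2 + ((n : ℝ) - 2) * b) ^ 2 / (2 * (2 + ((n : ℝ) - 3) * b))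

set_option maxHeartbeats 1000000 in
/-- for `9 ≤ n ≤ 11`, the function
`g(b) = ((1+2(n-2)a(b))²/(1+2(n-1)a(b))) · ((2+(n-3)b)/(1+(n-2)b))`
is strictly increasing on `(0, 1/(2n+2)]`. -/
theorem stmt_0 (n : ℕ) (hn9 : 9 ≤ n) (hn11 : n ≤ 11) :
    StrictMonoOn
      (fun b : ℝ =>
        (1 + 2 * ((n : ℝ) - 2) * aFun n b) ^ 2 / (1 + 2 * ((n : ℝ) - 1) * aFun n b) *
          ((2 + ((n : ℝ) - 3) * b) / (1 + ((n : ℝ) - 2) * b)))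
      (Set.Ioc 0 (1 / (2 * (n : ℝ) + 2))) := by
  interval_cases n
  · intro x hx y hy hxy
    have hx0 : (0:ℝ) < x := hx.1
    obtain ⟨u, hu, rfl⟩ : ∃ u : ℝ, 0 < u ∧ y = x + u := ⟨y - x, sub_pos.mpr hxy, by ring⟩
    have hm : ∀ i j : ℕ, 0 < x ^ i * u ^ j := fun i j => mul_pos (pow_pos hx0 i) (pow_pos hu j)
    have e : ∀ b : ℝ, 0 < b →
        (1 + 2 * (((9:ℕ):ℝ) - 2) * aFun 9 b) ^ 2 / (1 + 2 * (((9:ℕ):ℝ) - 1) * aFun 9 b) * ((2 + (((9:ℕ):ℝ) - 3) * b) / (1 + (((9:ℕ):ℝ) - 2) * b)) =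
        (2 + 6 * b + 7 * b * (2 + 7 * b) ^ 2) ^ 2 / ((2 + 6 * b + 8 * b * (2 + 7 * b) ^ 2) * (1 + 7 * b)) := by
      intro b hb
      have c : ((9:ℕ):ℝ) = 9 := by norm_num
      rw [aFun, c]
      have h1 : (0:ℝ) < 2 + 6 * b := by linarith
      have h2 : (0:ℝ) < 1 + 7 * b := by linarith
      have hb2 : (0:ℝ) < b * (2 + ((9:ℝ) - 2) * b) ^ 2 :=
        mul_pos hb (pow_pos (by nlinarith) 2)
      have h3 : (0:ℝ) < 2 + 6 * b + 8 * b * (2 + 7 * b) ^ 2 := by nlinarith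
      have h4 : (0:ℝ) < 1 + 2 * ((9:ℝ) - 1) *
          (b * (2 + ((9:ℝ) - 2) * b) ^ 2 / (2 * (2 + ((9:ℝ) - 3) * b))) := by
        have hd : (0:ℝ) < 2 * (2 + ((9:ℝ) - 3) * b) := by nlinarith
        have := div_pos hb2 hd
        nlinarith
      field_simp
      ring
    show (1 + 2 * (((9:ℕ):ℝ) - 2) * aFun 9 x) ^ 2 / (1 + 2 * (((9:ℕ):ℝ) - 1) * aFun 9 x) * ((2 + (((9:ℕ):ℝ) - 3) * x) / (1 + (((9:ℕ):ℝ) - 2) * x)) <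
        (1 + 2 * (((9:ℕ):ℝ) - 2) * aFun 9 (x + u)) ^ 2 / (1 + 2 * (((9:ℕ):ℝ) - 1) * aFun 9 (x + u)) * ((2 + (((9:ℕ):ℝ) - 3) * (x + u)) / (1 + (((9:ℕ):ℝ) - 2) * (x + u)))
    rw [e x hx0, e (x + u) (by linarith)]
    have hdx : (0:ℝ) < ((2 + 6 * x + 8 * x * (2 + 7 * x) ^ 2) * (1 + 7 * x)) := by
      nlinarith [mul_pos hx0 (pow_pos (show (0:ℝ) < 2 + 7 * x by linarith) 2)]
    have hdy : (0:ℝ) < ((2 + 6 * (x + u) + 8 * (x + u) * (2 + 7 * (x + u)) ^ 2) * (1 + 7 * (x + u))) := by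
      have hxu : (0:ℝ) < x + u := by linarith
      nlinarith [mul_pos hxu (pow_pos (show (0:ℝ) < 2 + 7 * (x + u) by linarith) 2)]
    rw [div_lt_div_iff₀ hdx hdy]
    linarith [hm 0 1, hm 0 2, hm 0 3, hm 0 4, hm 0 5, hm 0 6, hm 1 1, hm 1 2, hm 1 3, hm 1 4, hm 1 5, hm 1 6, hm 2 1, hm 2 2, hm 2 3, hm 2 4, hm 2 5, hm 2 6, hm 3 1, hm 3 2, hm 3 3, hm 3 4, hm 3 5, hm 3 6, hm 4 1, hm 4 2, hm 4 3, hm 4 4, hm 4 5, hm 4 6, hm 5 1, hm 5 2, hm 5 3, hm 5 4, hm 5 5, hm 6 1, hm 6 2, hm 6 3, hm 6 4, hm 7 1, hm 7 2, hm 7 3, hm 8 1, hm 8 2, hm 9 1]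
  · intro x hx y hy hxy
    have hx0 : (0:ℝ) < x := hx.1
    obtain ⟨u, hu, rfl⟩ : ∃ u : ℝ, 0 < u ∧ y = x + u := ⟨y - x, sub_pos.mpr hxy, by ring⟩
    have hm : ∀ i j : ℕ, 0 < x ^ i * u ^ j := fun i j => mul_pos (pow_pos hx0 i) (pow_pos hu j)
    have e : ∀ b : ℝ, 0 < b →
        (1 + 2 * (((10:ℕ):ℝ) - 2) * aFun 10 b) ^ 2 / (1 + 2 * (((10:ℕ):ℝ) - 1) * aFun 10 b) * ((2 + (((10:ℕ):ℝ) - 3) * b) / (1 + (((10:ℕ):ℝ) - 2) * b)) =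
        (2 + 7 * b + 8 * b * (2 + 8 * b) ^ 2) ^ 2 / ((2 + 7 * b + 9 * b * (2 + 8 * b) ^ 2) * (1 + 8 * b)) := by
      intro b hb
      have c : ((10:ℕ):ℝ) = 10 := by norm_num
      rw [aFun, c]
      have h1 : (0:ℝ) < 2 + 7 * b := by linarith
      have h2 : (0:ℝ) < 1 + 8 * b := by linarith
      have hb2 : (0:ℝ) < b * (2 + ((10:ℝ) - 2) * b) ^ 2 :=
        mul_pos hb (pow_pos (by nlinarith) 2)
      have h3 : (0:ℝ) < 2 + 7 * b + 9 * b * (2 + 8 * b) ^ 2 := by nlinarith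
      have h4 : (0:ℝ) < 1 + 2 * ((10:ℝ) - 1) *
          (b * (2 + ((10:ℝ) - 2) * b) ^ 2 / (2 * (2 + ((10:ℝ) - 3) * b))) := by
        have hd : (0:ℝ) < 2 * (2 + ((10:ℝ) - 3) * b) := by nlinarith
        have := div_pos hb2 hd
        nlinarith
      field_simp
      ring
    show (1 + 2 * (((10:ℕ):ℝ) - 2) * aFun 10 x) ^ 2 / (1 + 2 * (((10:ℕ):ℝ) - 1) * aFun 10 x) * ((2 + (((10:ℕ):ℝ) - 3) * x) / (1 + (((10:ℕ):ℝ) - 2) * x)) <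
        (1 + 2 * (((10:ℕ):ℝ) - 2) * aFun 10 (x + u)) ^ 2 / (1 + 2 * (((10:ℕ):ℝ) - 1) * aFun 10 (x + u)) * ((2 + (((10:ℕ):ℝ) - 3) * (x + u)) / (1 + (((10:ℕ):ℝ) - 2) * (x + u)))
    rw [e x hx0, e (x + u) (by linarith)]
    have hdx : (0:ℝ) < ((2 + 7 * x + 9 * x * (2 + 8 * x) ^ 2) * (1 + 8 * x)) := by
      nlinarith [mul_pos hx0 (pow_pos (show (0:ℝ) < 2 + 8 * x by linarith) 2)]
    have hdy : (0:ℝ) < ((2 + 7 * (x + u) + 9 * (x + u) * (2 + 8 * (x + u)) ^ 2) * (1 + 8 * (x + u))) := by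
      have hxu : (0:ℝ) < x + u := by linarith
      nlinarith [mul_pos hxu (pow_pos (show (0:ℝ) < 2 + 8 * (x + u) by linarith) 2)]
    rw [div_lt_div_iff₀ hdx hdy]
    linarith [hm 0 1, hm 0 2, hm 0 3, hm 0 4, hm 0 5, hm 0 6, hm 1 1, hm 1 2, hm 1 3, hm 1 4, hm 1 5, hm 1 6, hm 2 1, hm 2 2, hm 2 3, hm 2 4, hm 2 5, hm 2 6, hm 3 1, hm 3 2, hm 3 3, hm 3 4, hm 3 5, hm 3 6, hm 4 1, hm 4 2, hm 4 3, hm 4 4, hm 4 5, hm 4 6, hm 5 1, hm 5 2, hm 5 3, hm 5 4, hm 5 5, hm 6 1, hm 6 2, hm 6 3, hm 6 4, hm 7 1, hm 7 2, hm 7 3, hm 8 1, hm 8 2, hm 9 1]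
  · intro x hx y hy hxy
    have hx0 : (0:ℝ) < x := hx.1
    obtain ⟨u, hu, rfl⟩ : ∃ u : ℝ, 0 < u ∧ y = x + u := ⟨y - x, sub_pos.mpr hxy, by ring⟩
    have hm : ∀ i j : ℕ, 0 < x ^ i * u ^ j := fun i j => mul_pos (pow_pos hx0 i) (pow_pos hu j)
    have e : ∀ b : ℝ, 0 < b →
        (1 + 2 * (((11:ℕ):ℝ) - 2) * aFun 11 b) ^ 2 / (1 + 2 * (((11:ℕ):ℝ) - 1) * aFun 11 b) * ((2 + (((11:ℕ):ℝ) - 3) * b) / (1 + (((11:ℕ):ℝ) - 2) * b)) =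
        (2 + 8 * b + 9 * b * (2 + 9 * b) ^ 2) ^ 2 / ((2 + 8 * b + 10 * b * (2 + 9 * b) ^ 2) * (1 + 9 * b)) := by
      intro b hb
      have c : ((11:ℕ):ℝ) = 11 := by norm_num
      rw [aFun, c]
      have h1 : (0:ℝ) < 2 + 8 * b := by linarith
      have h2 : (0:ℝ) < 1 + 9 * b := by linarith
      have hb2 : (0:ℝ) < b * (2 + ((11:ℝ) - 2) * b) ^ 2 :=
        mul_pos hb (pow_pos (by nlinarith) 2)
      have h3 : (0:ℝ) < 2 + 8 * b + 10 * b * (2 + 9 * b) ^ 2 := by nlinarith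
      have h4 : (0:ℝ) < 1 + 2 * ((11:ℝ) - 1) *
          (b * (2 + ((11:ℝ) - 2) * b) ^ 2 / (2 * (2 + ((11:ℝ) - 3) * b))) := by
        have hd : (0:ℝ) < 2 * (2 + ((11:ℝ) - 3) * b) := by nlinarith
        have := div_pos hb2 hd
        nlinarith
      field_simp
      ring
    show (1 + 2 * (((11:ℕ):ℝ) - 2) * aFun 11 x) ^ 2 / (1 + 2 * (((11:ℕ):ℝ) - 1) * aFun 11 x) * ((2 + (((11:ℕ):ℝ) - 3) * x) / (1 + (((11:ℕ):ℝ) - 2) * x)) <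
        (1 + 2 * (((11:ℕ):ℝ) - 2) * aFun 11 (x + u)) ^ 2 / (1 + 2 * (((11:ℕ):ℝ) - 1) * aFun 11 (x + u)) * ((2 + (((11:ℕ):ℝ) - 3) * (x + u)) / (1 + (((11:ℕ):ℝ) - 2) * (x + u)))
    rw [e x hx0, e (x + u) (by linarith)]
    have hdx : (0:ℝ) < ((2 + 8 * x + 10 * x * (2 + 9 * x) ^ 2) * (1 + 9 * x)) := by
      nlinarith [mul_pos hx0 (pow_pos (show (0:ℝ) < 2 + 9 * x by linarith) 2)]
    have hdy : (0:ℝ) < ((2 + 8 * (x + u) + 10 * (x + u) * (2 + 9 * (x + u)) ^ 2) * (1 + 9 * (x + u))) := by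
      have hxu : (0:ℝ) < x + u := by linarith
      nlinarith [mul_pos hxu (pow_pos (show (0:ℝ) < 2 + 9 * (x + u) by linarith) 2)]
    rw [div_lt_div_iff₀ hdx hdy]
    linarith [hm 0 1, hm 0 2, hm 0 3, hm 0 4, hm 0 5, hm 0 6, hm 1 1, hm 1 2, hm 1 3, hm 1 4, hm 1 5, hm 1 6, hm 2 1, hm 2 2, hm 2 3, hm 2 4, hm 2 5, hm 2 6, hm 3 1, hm 3 2, hm 3 3, hm 3 4, hm 3 5, hm 3 6, hm 4 1, hm 4 2, hm 4 3, hm 4 4, hm 4 5, hm 4 6, hm 5 1, hm 5 2, hm 5 3, hm 5 4, hm 5 5, hm 6 1, hm 6 2, hm 6 3, hm 6 4, hm 7 1, hm 7 2, hm 7 3, hm 8 1, hm 8 2, hm 9 1]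
end

section
/- Let n be an integer with 9 ≤ n ≤ 11. Then the function h(b) = (1+2(n-1)a(b))²/((1+2(n-2)a(b))(1+(n-2)b)²) is strictly increasing on the interval (0, 1/(2n+2)]. -/
set_option maxHeartbeats 1000000 in
/-- for `9 ≤ n ≤ 11`, the function
`h(b) = (1+2(n-1)a(b))² / ((1+2(n-2)a(b))(1+(n-2)b)²)`
is strictly increasing on `(0, 1/(2n+2)]`. -/
theorem stmt_1 (n : ℕ) (hn9 : 9 ≤ n) (hn11 : n ≤ 11) :
    StrictMonoOn
      (fun b : ℝ =>
        (1 + 2 * ((n : ℝ) - 1) * aFun n b) ^ 2 /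
          ((1 + 2 * ((n : ℝ) - 2) * aFun n b) * (1 + ((n : ℝ) - 2) * b) ^ 2))
      (Set.Ioc 0 (1 / (2 * (n : ℝ) + 2))) := by
  intro x hx y hy hxy
  obtain ⟨hx0, hxu⟩ := hx
  obtain ⟨hy0, hyu⟩ := hy
  dsimp only
  interval_cases n
  · -- n = 9
    have key : ∀ b : ℝ, 0 < b →
        (1 + 2 * (((9 : ℕ) : ℝ) - 1) * aFun 9 b) ^ 2 /
          ((1 + 2 * (((9 : ℕ) : ℝ) - 2) * aFun 9 b) * (1 + (((9 : ℕ) : ℝ) - 2) * b) ^ 2)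
        = (4 + 76 * b + 448 * b ^ 2 + 784 * b ^ 3) ^ 2 / (2 * (2 + 6 * b) * (4 + 68 * b + 392 * b ^ 2 + 686 * b ^ 3) * (1 + 7 * b) ^ 2) := by
      intro b hb
      have h1 : (0:ℝ) < 2 + 6 * b := by linarith
      have h2 : (0:ℝ) < 4 + 68 * b + 392 * b ^ 2 + 686 * b ^ 3 := by positivity
      have h3 : (0:ℝ) < 1 + 7 * b := by linarith
      simp only [aFun]
      push_cast
      rw [div_eq_div_iff (by positivity) (by positivity)]
      field_simp
      ring
    rw [key x hx0, key y hy0]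
    have hPx : (0:ℝ) < (2 * (2 + 6 * x) * (4 + 68 * x + 392 * x ^ 2 + 686 * x ^ 3) * (1 + 7 * x) ^ 2) := by positivity
    have hPy : (0:ℝ) < (2 * (2 + 6 * y) * (4 + 68 * y + 392 * y ^ 2 + 686 * y ^ 3) * (1 + 7 * y) ^ 2) := by positivity
    rw [div_lt_div_iff₀ hPx hPy]
    have hP : (0:ℝ) < 1024 + 27392 * y + 285824 * y ^ 2 + 1448832 * y ^ 3 + 3556224 * y ^ 4 + 3380608 * y ^ 5 + 27392 * x + 727680 * x * y + 7550592 * x * y ^ 2 + 38140032 * x * y ^ 3 + 93559424 * x * y ^ 4 + 89125120 * x * y ^ 5 + 285824 * x ^ 2 + 7550592 * x ^ 2 * y + 78029056 * x ^ 2 * y ^ 2 + 393505280 * x ^ 2 * y ^ 3 + 966897792 * x ^ 2 * y ^ 4 + 925364608 * x ^ 2 * y ^ 5 + 1448832 * x ^ 3 + 38140032 * x ^ 3 * y + 393505280 * x ^ 3 * y ^ 2 + 1986875520 * x ^ 3 * y ^ 3 + 4905876864 * x ^ 3 * y ^ 4 + 4732851200 * x ^ 3 * y ^ 5 + 3556224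 * x ^ 4 + 93559424 * x ^ 4 * y + 966897792 * x ^ 4 * y ^ 2 + 4905876864 * x ^ 4 * y ^ 3 + 12219361280 * x ^ 4 * y ^ 4 + 11926785024 * x ^ 4 * y ^ 5 + 3380608 * x ^ 5 + 89125120 * x ^ 5 * y + 925364608 * x ^ 5 * y ^ 2 + 4732851200 * x ^ 5 * y ^ 3 + 11926785024 * x ^ 5 * y ^ 4 + 11806312448 * x ^ 5 * y ^ 5 := by positivity
    linarith [mul_pos (sub_pos.mpr hxy) hP]
  · -- n = 10
    have key : ∀ b : ℝ, 0 < b →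
        (1 + 2 * (((10 : ℕ) : ℝ) - 1) * aFun 10 b) ^ 2 /
          ((1 + 2 * (((10 : ℕ) : ℝ) - 2) * aFun 10 b) * (1 + (((10 : ℕ) : ℝ) - 2) * b) ^ 2)
        = (4 + 86 * b + 576 * b ^ 2 + 1152 * b ^ 3) ^ 2 / (2 * (2 + 7 * b) * (4 + 78 * b + 512 * b ^ 2 + 1024 * b ^ 3) * (1 + 8 * b) ^ 2) := by
      intro b hb
      have h1 : (0:ℝ) < 2 + 7 * b := by linarith
      have h2 : (0:ℝ) < 4 + 78 * b + 512 * b ^ 2 + 1024 * b ^ 3 := by positivity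
      have h3 : (0:ℝ) < 1 + 8 * b := by linarith
      simp only [aFun]
      push_cast
      rw [div_eq_div_iff (by positivity) (by positivity)]
      field_simp
      ring
    rw [key x hx0, key y hy0]
    have hPx : (0:ℝ) < (2 * (2 + 7 * x) * (4 + 78 * x + 512 * x ^ 2 + 1024 * x ^ 3) * (1 + 8 * x) ^ 2) := by positivity
    have hPy : (0:ℝ) < (2 * (2 + 7 * y) * (4 + 78 * y + 512 * y ^ 2 + 1024 * y ^ 3) * (1 + 8 * y) ^ 2) := by positivity
    rw [div_lt_div_iff₀ hPx hPy]
    have hP : (0:ℝ) < 1024 + 31232 * y + 371712 * y ^ 2 + 2150400 * y ^ 3 + 6029312 * y ^ 4 + 6553600 * y ^ 5 + 31232 * x + 946432 * x * y + 11203584 * x * y ^ 2 + 64581632 * x * y ^ 3 + 180879360 * x * y ^ 4 + 196870144 * x * y ^ 5 + 371712 * x ^ 2 + 11203584 * x ^ 2 * y + 132080384 * x ^ 2 * y ^ 2 + 759813120 * x ^ 2 * y ^ 3 + 2129854464 * x ^ 2 * y ^ 4 + 2326331392 * x ^ 2 * y ^ 5 + 2150400 * x ^ 3 + 64581632 * x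 ^ 3 * y + 759813120 * x ^ 3 * y ^ 2 + 4372660224 * x ^ 3 * y ^ 3 + 12301434880 * x ^ 3 * y ^ 4 + 13523484672 * x ^ 3 * y ^ 5 + 6029312 * x ^ 4 + 180879360 * x ^ 4 * y + 2129854464 * x ^ 4 * y ^ 2 + 12301434880 * x ^ 4 * y ^ 3 + 34851520512 * x ^ 4 * y ^ 4 + 38692454400 * x ^ 4 * y ^ 5 + 6553600 * x ^ 5 + 196870144 * x ^ 5 * y + 2326331392 * x ^ 5 * y ^ 2 + 13523484672 * x ^ 5 * y ^ 3 + 38692454400 * x ^ 5 * y ^ 4 + 43486543872 * x ^ 5 * y ^ 5 := by positivity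
    linarith [mul_pos (sub_pos.mpr hxy) hP]
  · -- n = 11
    have key : ∀ b : ℝ, 0 < b →
        (1 + 2 * (((11 : ℕ) : ℝ) - 1) * aFun 11 b) ^ 2 /
          ((1 + 2 * (((11 : ℕ) : ℝ) - 2) * aFun 11 b) * (1 + (((11 : ℕ) : ℝ) - 2) * b) ^ 2)
        = (4 + 96 * b + 720 * b ^ 2 + 1620 * b ^ 3) ^ 2 / (2 * (2 + 8 * b) * (4 + 88 * b + 648 * b ^ 2 + 1458 * b ^ 3) * (1 + 9 * b) ^ 2) := by
      intro b hb
      have h1 : (0:ℝ) < 2 + 8 * b := by linarith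
      have h2 : (0:ℝ) < 4 + 88 * b + 648 * b ^ 2 + 1458 * b ^ 3 := by positivity
      have h3 : (0:ℝ) < 1 + 9 * b := by linarith
      simp only [aFun]
      push_cast
      rw [div_eq_div_iff (by positivity) (by positivity)]
      field_simp
      ring
    rw [key x hx0, key y hy0]
    have hPx : (0:ℝ) < (2 * (2 + 8 * x) * (4 + 88 * x + 648 * x ^ 2 + 1458 * x ^ 3) * (1 + 9 * x) ^ 2) := by positivity
    have hPy : (0:ℝ) < (2 * (2 + 8 * y) * (4 + 88 * y + 648 * y ^ 2 + 1458 * y ^ 3) * (1 + 9 * y) ^ 2) := by positivity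
    rw [div_lt_div_iff₀ hPx hPy]
    have hP : (0:ℝ) < 1024 + 35072 * y + 468864 * y ^ 2 + 3048192 * y ^ 3 + 9611136 * y ^ 4 + 11757312 * y ^ 5 + 35072 * x + 1193856 * x * y + 15876864 * x * y ^ 2 + 102840192 * x * y ^ 3 + 323792640 * x * y ^ 4 + 396389376 * x * y ^ 5 + 468864 * x ^ 2 + 15876864 * x ^ 2 * y + 210266496 * x ^ 2 * y ^ 2 + 1358767872 * x ^ 2 * y ^ 3 + 4278915072 * x ^ 2 * y ^ 4 + 5252159232 * x ^ 2 * y ^ 5 + 3048192 * x ^ 3 + 102840192 * x ^ 3 * y + 1358767872 * x ^ 3 * y ^ 2 + 8778419712 * x ^ 3 * y ^ 3 + 27717023232 * x ^ 3 * y ^ 4 + 34201180800 * x ^ 3 * y ^ 5 + 9611136 * x ^ 4 + 323792640 * x ^ 4 * y + 4278915072 * x ^ 4 * y ^ 2 + 27717023232 * x ^ 4 * y ^ 3 + 88016077440 * x ^ 4 * y ^ 4 + 109519361280 * x ^ 4 * y ^ 5 + 11757312 * x ^ 5 + 396389376 * x ^ 5 * y + 5252159232 * x ^ 5 * y ^ 2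 + 34201180800 * x ^ 5 * y ^ 3 + 109519361280 * x ^ 5 * y ^ 4 + 137749507200 * x ^ 5 * y ^ 5 := by positivity
    linarith [mul_pos (sub_pos.mpr hxy) hP]
end

section
/- Let n be an integer with 9 ≤ n ≤ 11. For every b with 0 < b ≤ 1/(2n+2), the function ρ is differentiable at b and its derivative satisfies ρ'(b) > 4/9. -/
/-- The quantity `γ(b) = b / (2+(n-3)b)`. -/
noncomputable def gammaFun (n : ℕ) (b : ℝ) : ℝ :=
  b / (2 + ((n : ℝ) - 3) * b)

/-- The quantity
`ρ(b) = b - 2(n-1)γ(b)(1-2b)/n² - 2(n-1)(1+γ(b))(n²b²-2(n-1)(a(b)-b)(1-2b))/(n²(1+2(n-1)a(b)))`. -/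
noncomputable def rhoFun (n : ℕ) (b : ℝ) : ℝ :=
  b - 2 * ((n : ℝ) - 1) * gammaFun n b * (1 - 2 * b) / (n : ℝ) ^ 2 -
    2 * ((n : ℝ) - 1) * (1 + gammaFun n b) *
      ((n : ℝ) ^ 2 * b ^ 2 - 2 * ((n : ℝ) - 1) * (aFun n b - b) * (1 - 2 * b)) /
      ((n : ℝ) ^ 2 * (1 + 2 * ((n : ℝ) - 1) * aFun n b))

/-!
For `b ≥ 0`, clearing denominators writes `ρ` as a quotient `P/Q` of polynomials in `b` with
`Q > 0`, so `ρ' = W/Q²` with `W = P'Q - PQ'`. After the shift `n = k + 7`, the polynomial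
`9W - 4Q²` in `k` and `b` has only positive coefficients, hence `ρ' > 4/9` for every `n ≥ 7`
and `b > 0`.
-/

open Polynomial

theorem Polynomial.hasDerivAt_eval_div_eval {𝕜 : Type*} [NontriviallyNormedField 𝕜]
    {p q : 𝕜[X]} {x : 𝕜} (hq : q.eval x ≠ 0) :
    HasDerivAt (fun y => p.eval y / q.eval y) ((wronskian q p).eval x / q.eval x ^ 2) x := by
  refine ((p.hasDerivAt x).div (q.hasDerivAt x) hq).congr_deriv ?_
  simp only [wronskian, eval_sub, eval_mul]
  ring

namespace RhoFun

/- `γ = b/D`, `a = bS²/(2D)` and `1 + 2(n-1)a = E/D`; note `S = D + b`. -/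
noncomputable def D (n : ℕ) : ℝ[X] := 2 + ((n : ℝ[X]) - 3) * X

noncomputable def S (n : ℕ) : ℝ[X] := 2 + ((n : ℝ[X]) - 2) * X

noncomputable def E (n : ℕ) : ℝ[X] := D n + ((n : ℝ[X]) - 1) * X * S n ^ 2

noncomputable def denom (n : ℕ) : ℝ[X] := (n : ℝ[X]) ^ 2 * D n * E n

noncomputable def numer (n : ℕ) : ℝ[X] :=
  (n : ℝ[X]) ^ 2 * X * D n * E n - 2 * ((n : ℝ[X]) - 1) * X * (1 - 2 * X) * E n
    - 2 * ((n : ℝ[X]) - 1) * X * S n *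
      ((n : ℝ[X]) ^ 2 * X * D n - ((n : ℝ[X]) - 1) * (S n ^ 2 - 2 * D n) * (1 - 2 * X))

variable {n : ℕ} {b : ℝ}

theorem eval_D : (D n).eval b = 2 + ((n : ℝ) - 3) * b := by simp [D]

theorem eval_S : (S n).eval b = 2 + ((n : ℝ) - 2) * b := by simp [S]

theorem eval_E : (E n).eval b = (D n).eval b + ((n : ℝ) - 1) * b * (S n).eval b ^ 2 := by
  simp [E]

theorem eval_D_pos (hn : 3 ≤ n) (hb : 0 ≤ b) : 0 < (D n).eval b := by
  have : (3 : ℝ) ≤ n := by exact_mod_cast hn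
  rw [eval_D]
  nlinarith

theorem eval_E_pos (hn : 3 ≤ n) (hb : 0 ≤ b) : 0 < (E n).eval b := by
  have : (3 : ℝ) ≤ n := by exact_mod_cast hn
  have : 0 ≤ ((n : ℝ) - 1) * b * (S n).eval b ^ 2 := by
    have : (0 : ℝ) ≤ n - 1 := by linarith
    positivity
  rw [eval_E]
  linarith [eval_D_pos hn hb]

theorem eval_denom_pos (hn : 3 ≤ n) (hb : 0 ≤ b) : 0 < (denom n).eval b := by
  simp only [denom, eval_mul, eval_pow, eval_natCast]
  exact mul_pos (mul_pos (by positivity) (eval_D_pos hn hb)) (eval_E_pos hn hb)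

theorem rhoFun_eq_eval_div_eval (hn : 3 ≤ n) (hb : 0 ≤ b) :
    rhoFun n b = (numer n).eval b / (denom n).eval b := by
  have hn0 : (n : ℝ) ≠ 0 := by positivity
  have hD := (eval_D_pos hn hb).ne'
  have hE := (eval_E_pos hn hb).ne'
  have hγ : gammaFun n b = b / (D n).eval b := by rw [gammaFun, eval_D]
  have ha : aFun n b = b * (S n).eval b ^ 2 / (2 * (D n).eval b) := by rw [aFun, eval_D, eval_S]
  have h1a : 1 + 2 * ((n : ℝ) - 1) * aFun n b = (E n).eval b / (D n).eval b := by
    rw [ha, eval_E]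
    field_simp
  rw [rhoFun, h1a, hγ, ha]
  simp only [numer, denom, eval_mul, eval_sub, eval_pow, eval_natCast, eval_one, eval_X, eval_ofNat]
  field_simp
  rw [eval_D, eval_S]
  ring

theorem hasDerivAt_rhoFun (hn : 3 ≤ n) (hb : 0 < b) :
    HasDerivAt (rhoFun n) ((wronskian (denom n) (numer n)).eval b / (denom n).eval b ^ 2) b := by
  refine (hasDerivAt_eval_div_eval (eval_denom_pos hn hb.le).ne').congr_of_eventuallyEq ?_
  filter_upwards [Ioi_mem_nhds hb] with x hx using rhoFun_eq_eval_div_eval hn (le_of_lt hx)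

theorem four_mul_eval_denom_sq_lt (hn : 7 ≤ n) (hb : 0 < b) :
    4 * (denom n).eval b ^ 2 < 9 * (wronskian (denom n) (numer n)).eval b := by
  obtain ⟨k, rfl⟩ := Nat.exists_eq_add_of_le' hn
  simp only [wronskian, numer, denom, E, D, S, derivative_add, derivative_sub, derivative_mul,
    derivative_sq, derivative_X, derivative_natCast, derivative_ofNat, derivative_one, eval_add,
    eval_mul, eval_sub, eval_pow, eval_natCast, eval_one, eval_X, eval_ofNat, eval_zero, eval_C]
  push_cast
  rw [← sub_pos]
  ring_nf
  positivity

end RhoFun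

theorem stmt_2_general (n : ℕ) (hn9 : 9 ≤ n) (b : ℝ)
    (hb : b ∈ Set.Ioc (0 : ℝ) (1 / (2 * (n : ℝ) + 2))) :
    DifferentiableAt ℝ (rhoFun n) b ∧ 4 / 9 < deriv (rhoFun n) b := by
  have hρ := RhoFun.hasDerivAt_rhoFun (n := n) (by omega) hb.1
  refine ⟨hρ.differentiableAt, ?_⟩
  rw [hρ.deriv, lt_div_iff₀ (pow_pos (RhoFun.eval_denom_pos (by omega) hb.1.le) 2)]
  linarith [RhoFun.four_mul_eval_denom_sq_lt (n := n) (by omega) hb.1]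

/-- for `9 ≤ n ≤ 11` and `0 < b ≤ 1/(2n+2)`, the function `ρ` is
differentiable at `b` and `ρ'(b) > 4/9`. -/
theorem stmt_2 (n : ℕ) (hn9 : 9 ≤ n) (hn11 : n ≤ 11) (b : ℝ)
    (hb : b ∈ Set.Ioc (0 : ℝ) (1 / (2 * (n : ℝ) + 2))) :
    DifferentiableAt ℝ (rhoFun n) b ∧ 4 / 9 < deriv (rhoFun n) b :=
  stmt_2_general n hn9 b hb
end

section
/- Let n be an integer with 9 ≤ n ≤ 11 and let b satisfy 0 < b ≤ 1/(2n+2). Then (1 + b√(n-2))² ≤ 1 + (A(b)/2)·√(n(n-2)). -/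
/-- The quantity `A(b) = (2+8b)/((n-1)(n-4)) + (4/n)(2b+(n-2)a(b))`. -/
noncomputable def AFun (n : ℕ) (b : ℝ) : ℝ :=
  (2 + 8 * b) / (((n : ℝ) - 1) * ((n : ℝ) - 4)) +
    4 / (n : ℝ) * (2 * b + ((n : ℝ) - 2) * aFun n b)

lemma aFun_nonneg (n : ℕ) (b : ℝ) (hn : 3 ≤ n) (hb0 : 0 < b) : 0 ≤ aFun n b := by
  unfold aFun
  apply div_nonneg
  · exact mul_nonneg hb0.le (sq_nonneg _)
  · have : (3:ℝ) ≤ (n : ℝ) := by exact_mod_cast hn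
    nlinarith

/-- for `9 ≤ n ≤ 11` and `0 < b ≤ 1/(2n+2)`,
`(1 + b√(n-2))² ≤ 1 + (A(b)/2)·√(n(n-2))`. -/
theorem stmt_5 (n : ℕ) (hn9 : 9 ≤ n) (hn11 : n ≤ 11) (b : ℝ)
    (hb0 : 0 < b) (hb : b ≤ 1 / (2 * (n : ℝ) + 2)) :
    (1 + b * Real.sqrt ((n : ℝ) - 2)) ^ 2 ≤
      1 + AFun n b / 2 * Real.sqrt ((n : ℝ) * ((n : ℝ) - 2)) := by
  interval_cases n
  · -- n = 9
    push_cast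
    have hb' : b ≤ 1/20 := by push_cast at hb; linarith
    have ha : 0 ≤ aFun 9 b := aFun_nonneg 9 b (by norm_num) hb0
    have hA : 1/20 + 8/9*b ≤ AFun 9 b := by
      unfold AFun; push_cast; nlinarith
    have h1 : Real.sqrt ((9:ℝ) - 2) ≤ (13229/5000 : ℝ) := by
      rw [show ((9:ℝ) - 2) = 7 by norm_num]
      nlinarith [Real.sq_sqrt (show (0:ℝ) ≤ 7 by norm_num), Real.sqrt_nonneg (7:ℝ)]
    have h2 : ((7937/1000 : ℝ):ℝ) ≤ Real.sqrt ((9:ℝ) * ((9:ℝ) - 2)) := by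
      rw [show ((9:ℝ) * ((9:ℝ) - 2)) = 63 by norm_num]
      nlinarith [Real.sq_sqrt (show (0:ℝ) ≤ 63 by norm_num), Real.sqrt_nonneg (63:ℝ)]
    have hs2 : Real.sqrt ((9:ℝ) - 2) ^ 2 = 7 := by
      rw [Real.sq_sqrt (by norm_num)]; norm_num
    have hA0 : (0:ℝ) ≤ AFun 9 b := by linarith
    have h3 := mul_le_mul hA h2 (by norm_num) hA0
    have e1 : (1 + b * Real.sqrt ((9:ℝ) - 2)) ^ 2
        = 1 + 2 * (b * Real.sqrt ((9:ℝ) - 2)) + 7 * b ^ 2 := by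
      rw [add_sq, mul_pow, hs2]; ring
    rw [e1]
    nlinarith [mul_le_mul_of_nonneg_left h1 hb0.le, mul_le_mul_of_nonneg_left hb' hb0.le]
  · -- n = 10
    push_cast
    have hb' : b ≤ 1/22 := by push_cast at hb; linarith
    have ha : 0 ≤ aFun 10 b := aFun_nonneg 10 b (by norm_num) hb0
    have hA : 1/27 + 8/10*b ≤ AFun 10 b := by
      unfold AFun; push_cast; nlinarith
    have h1 : Real.sqrt ((10:ℝ) - 2) ≤ (5657/2000 : ℝ) := by
      rw [show ((10:ℝ) - 2) = 8 by norm_num]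
      nlinarith [Real.sq_sqrt (show (0:ℝ) ≤ 8 by norm_num), Real.sqrt_nonneg (8:ℝ)]
    have h2 : ((1118/125 : ℝ):ℝ) ≤ Real.sqrt ((10:ℝ) * ((10:ℝ) - 2)) := by
      rw [show ((10:ℝ) * ((10:ℝ) - 2)) = 80 by norm_num]
      nlinarith [Real.sq_sqrt (show (0:ℝ) ≤ 80 by norm_num), Real.sqrt_nonneg (80:ℝ)]
    have hs2 : Real.sqrt ((10:ℝ) - 2) ^ 2 = 8 := by
      rw [Real.sq_sqrt (by norm_num)]; norm_num
    have hA0 : (0:ℝ) ≤ AFun 10 b := by linarith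
    have h3 := mul_le_mul hA h2 (by norm_num) hA0
    have e1 : (1 + b * Real.sqrt ((10:ℝ) - 2)) ^ 2
        = 1 + 2 * (b * Real.sqrt ((10:ℝ) - 2)) + 8 * b ^ 2 := by
      rw [add_sq, mul_pow, hs2]; ring
    rw [e1]
    nlinarith [mul_le_mul_of_nonneg_left h1 hb0.le, mul_le_mul_of_nonneg_left hb' hb0.le]
  · -- n = 11
    push_cast
    have hb' : b ≤ 1/24 := by push_cast at hb; linarith
    have ha : 0 ≤ aFun 11 b := aFun_nonneg 11 b (by norm_num) hb0
    have hA : 1/35 + 8/11*b ≤ AFun 11 b := by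
      unfold AFun; push_cast; nlinarith
    have h1 : Real.sqrt ((11:ℝ) - 2) ≤ 3 := by
      rw [show ((11:ℝ) - 2) = 9 by norm_num]
      nlinarith [Real.sq_sqrt (show (0:ℝ) ≤ 9 by norm_num), Real.sqrt_nonneg (9:ℝ)]
    have h2 : (49749/5000 : ℝ) ≤ Real.sqrt ((11:ℝ) * ((11:ℝ) - 2)) := by
      rw [show ((11:ℝ) * ((11:ℝ) - 2)) = 99 by norm_num]
      nlinarith [Real.sq_sqrt (show (0:ℝ) ≤ 99 by norm_num), Real.sqrt_nonneg (99:ℝ)]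
    have hs2 : Real.sqrt ((11:ℝ) - 2) ^ 2 = 9 := by
      rw [Real.sq_sqrt (by norm_num)]; norm_num
    have hA0 : (0:ℝ) ≤ AFun 11 b := by linarith
    have h3 := mul_le_mul hA h2 (by norm_num) hA0
    have e1 : (1 + b * Real.sqrt ((11:ℝ) - 2)) ^ 2
        = 1 + 2 * (b * Real.sqrt ((11:ℝ) - 2)) + 9 * b ^ 2 := by
      rw [add_sq, mul_pow, hs2]; ring
    rw [e1]
    have hbb : b ^ 2 ≤ b / 24 := by nlinarith
    have hbs : b * Real.sqrt ((11:ℝ) - 2) ≤ 3 * b := by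
      nlinarith [mul_le_mul_of_nonneg_left h1 hb0.le]
    have h4 : (1/35 + 8/11*b) * (49749/5000 : ℝ) / 2 ≤ AFun 11 b / 2 * Real.sqrt ((11:ℝ) * ((11:ℝ) - 2)) := by
      linarith
    set X := b * Real.sqrt ((11:ℝ) - 2) with hXdef
    set T := AFun 11 b / 2 * Real.sqrt ((11:ℝ) * ((11:ℝ) - 2)) with hTdef
    linarith only [h4, hbb, hbs, hb', hb0]
end

section
/- Let n ≥ 2 and let H be a real symmetric n×n matrix with eigenvalues λ₁ ≤ λ₂ ≤ … ≤ λₙ (listed with multiplicity), and let λ̄ = (λ₁ + … + λₙ)/n be their mean. Then ∑ᵢ (λᵢ - λ̄)² ≥ ((n-1)/n)·(λ₂ - λ₁)². Equivalently, the trace-free part H₀ = H - λ̄·I satisfies |H₀|² ≥ ((n-1)/n)·(λ₂ - λ₁)², where |H₀|² is the squared Frobenius norm. -/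
/-!
With `y i = λᵢ - λ₁`, the sum of squared deviations from the mean is `∑ y² - (∑ y)² / n`.
Since `y₁ = 0`, Cauchy–Schwarz over the other `n - 1` indices gives `(∑ y)² ≤ (n - 1) ∑ y²`, so
the sum is at least `(∑ y²) / n`; and `∑ y² ≥ (n - 1)(λ₂ - λ₁)²` because `y i ≥ λ₂ - λ₁ ≥ 0`
for `i ≠ 1`.
-/

open Finset

variable {ι : Type*} [Fintype ι]

theorem sum_sub_mean_sq_eq [Nonempty ι] (x : ι → ℝ) (c : ℝ) :
    ∑ i, (x i - (∑ j, x j) / Fintype.card ι) ^ 2 =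
      ∑ i, (x i - c) ^ 2 - (∑ i, (x i - c)) ^ 2 / Fintype.card ι := by
  have hN : (Fintype.card ι : ℝ) ≠ 0 := by positivity
  simp only [sub_sq, sum_add_distrib, sum_sub_distrib, ← sum_mul, ← mul_sum, sum_const,
    card_univ, nsmul_eq_mul]
  field_simp
  ring

theorem cast_card_univ_erase [DecidableEq ι] (i₀ : ι) :
    (#(univ.erase i₀) : ℝ) = Fintype.card ι - 1 := by
  rw [cast_card_erase_of_mem (mem_univ i₀), card_univ]

theorem sq_sum_le_card_sub_one_mul_sum_sq [DecidableEq ι] {y : ι → ℝ} {i₀ : ι}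
    (hy : y i₀ = 0) : (∑ i, y i) ^ 2 ≤ (Fintype.card ι - 1) * ∑ i, y i ^ 2 := by
  rw [← add_sum_erase _ _ (mem_univ i₀), ← add_sum_erase _ (fun i => y i ^ 2) (mem_univ i₀),
    hy, ← cast_card_univ_erase i₀]
  simpa using sq_sum_le_card_mul_sum_sq (s := univ.erase i₀) (f := y)

theorem card_sub_one_mul_sq_le_sum_sq [DecidableEq ι] {y : ι → ℝ} {i₀ : ι} {d : ℝ}
    (hy : ∀ i ≠ i₀, d ^ 2 ≤ y i ^ 2) : (Fintype.card ι - 1) * d ^ 2 ≤ ∑ i, y i ^ 2 := by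
  have hrest : #(univ.erase i₀) • d ^ 2 ≤ ∑ i ∈ univ.erase i₀, y i ^ 2 :=
    card_nsmul_le_sum _ _ _ fun i hi => hy i (ne_of_mem_erase hi)
  rw [nsmul_eq_mul, cast_card_univ_erase] at hrest
  rw [← add_sum_erase _ _ (mem_univ i₀)]
  linarith [sq_nonneg (y i₀)]

theorem card_sub_one_div_card_mul_sq_le_sum_sub_mean_sq (x : ι → ℝ) (i₀ : ι) {d : ℝ}
    (hx : ∀ i ≠ i₀, d ^ 2 ≤ (x i - x i₀) ^ 2) :
    (Fintype.card ι - 1) / Fintype.card ι * d ^ 2 ≤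
      ∑ i, (x i - (∑ j, x j) / Fintype.card ι) ^ 2 := by
  classical
  have : Nonempty ι := ⟨i₀⟩
  set N : ℝ := (Fintype.card ι : ℝ)
  set y := fun i => x i - x i₀
  have hN : 0 < N := by positivity
  have hsum : (∑ i, y i) ^ 2 ≤ (N - 1) * ∑ i, y i ^ 2 :=
    sq_sum_le_card_sub_one_mul_sum_sq (sub_self (x i₀))
  have hsq : (N - 1) * d ^ 2 ≤ ∑ i, y i ^ 2 := card_sub_one_mul_sq_le_sum_sq hx
  calc (N - 1) / N * d ^ 2
      ≤ (∑ i, y i ^ 2) / N := by rw [div_mul_eq_mul_div]; gcongr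
    _ = ∑ i, y i ^ 2 - (N - 1) * (∑ i, y i ^ 2) / N := by field_simp; ring
    _ ≤ ∑ i, y i ^ 2 - (∑ i, y i) ^ 2 / N := by gcongr
    _ = ∑ i, (x i - (∑ j, x j) / N) ^ 2 := (sum_sub_mean_sq_eq x (x i₀)).symm

theorem stmt_8 (n : ℕ) (hn : 2 ≤ n) (lam : Fin n → ℝ) (hmono : Monotone lam) :
    ((n : ℝ) - 1) / n * (lam ⟨1, by omega⟩ - lam ⟨0, by omega⟩) ^ 2 ≤
      ∑ i, (lam i - (∑ j, lam j) / n) ^ 2 := by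
  have hgap : ∀ i ≠ ⟨0, by omega⟩, (lam ⟨1, by omega⟩ - lam ⟨0, by omega⟩) ^ 2 ≤
      (lam i - lam ⟨0, by omega⟩) ^ 2 := by
    intro i hi
    have h01 := hmono (show (⟨0, by omega⟩ : Fin n) ≤ ⟨1, by omega⟩ from
      Fin.mk_le_mk.2 zero_le_one)
    have h1i := hmono (show (⟨1, by omega⟩ : Fin n) ≤ i from
      Fin.mk_le_mk.2 (Nat.one_le_iff_ne_zero.2 fun h => hi (Fin.ext h)))
    exact pow_le_pow_left₀ (sub_nonneg.2 h01) (by linarith) 2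
  simpa using card_sub_one_div_card_mul_sq_le_sum_sub_mean_sq lam _ hgap
end

section
/- Let n be an integer with 9 ≤ n ≤ 11, let b satisfy 0 < b ≤ 1/(5n), and set a = b + (n-2)b²/2. Then nb²(1-2b) - 2(a-b)(1-2b+nb²) ≥ 0 and n²b² - 2(n-1)(a-b)(1-2b) ≥ 0. -/
/-- for `9 ≤ n ≤ 11`, `0 < b ≤ 1/(5n)` and `a = b + (n-2)b²/2`, one has
`nb²(1-2b) - 2(a-b)(1-2b+nb²) ≥ 0` and `n²b² - 2(n-1)(a-b)(1-2b) ≥ 0`. -/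
theorem stmt_10 (n : ℕ) (hn9 : 9 ≤ n) (hn11 : n ≤ 11) (b : ℝ)
    (hb0 : 0 < b) (hb : b ≤ 1 / (5 * (n : ℝ)))
    (a : ℝ) (ha : a = b + ((n : ℝ) - 2) * b ^ 2 / 2) :
    (n : ℝ) * b ^ 2 * (1 - 2 * b) - 2 * (a - b) * (1 - 2 * b + (n : ℝ) * b ^ 2) ≥ 0 ∧
    (n : ℝ) ^ 2 * b ^ 2 - 2 * ((n : ℝ) - 1) * (a - b) * (1 - 2 * b) ≥ 0 := by
  have hm9 : (9 : ℝ) ≤ (n : ℝ) := by exact_mod_cast hn9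
  have hm11 : (n : ℝ) ≤ 11 := by exact_mod_cast hn11
  have hnpos : (0 : ℝ) < 5 * (n : ℝ) := by nlinarith
  have hnb : (n : ℝ) * b ≤ 1 / 5 := by
    rw [le_div_iff₀ hnpos] at hb; nlinarith
  have hb45 : b ≤ 1 / 45 := by nlinarith
  have key : 2 - 4 * b - (n : ℝ) * ((n : ℝ) - 2) * b ^ 2 ≥ 0 := by
    nlinarith [mul_pos hb0 hb0, mul_nonneg (by linarith : (0:ℝ) ≤ (n:ℝ)) hb0.le]
  subst ha
  refine ⟨by nlinarith [mul_nonneg (sq_nonneg b) key], ?_⟩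
  nlinarith [mul_nonneg (sq_nonneg b) (by linarith : (0:ℝ) ≤ 3 * (n : ℝ) - 2),
    mul_nonneg (mul_nonneg (mul_nonneg hb0.le hb0.le) hb0.le)
      (mul_nonneg (by linarith : (0:ℝ) ≤ (n:ℝ) - 1) (by linarith : (0:ℝ) ≤ (n:ℝ) - 2))]
end

section
/- Let n be an integer with 9 ≤ n ≤ 11, let b satisfy 0 < b ≤ 1/(2n+2), and set a = b(2+(n-2)b)²/(2(2+(n-3)b)) and γ = b/(2+(n-3)b). Define f(x,y) = (2b + (n-2)b² - 2a)·xy + 2a·(x+2)(y+2) + b²·(x² + y²). Then f(x,y) ≥ 0 for all real x, y with x ≥ -2γ-2 and y ≥ -2γ-2. -/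
/-!
Writing `D = 2 + (n-3)b`, so that `γ = b/D`, the form factors as
`f(x,y) = b D ((1-γ)(x+2+2γ)(y+2+2γ) + γ(x+y+2+2γ)²)`.
On the shifted quadrant `x, y ≥ -2γ-2` both summands are nonnegative as soon as `0 ≤ γ ≤ 1`,
which holds because `D - b = 2 + (n-4)b ≥ 0`.
-/

theorem quadForm_eq_of_gamma {m b a γ : ℝ} (hD : 2 + (m - 3) * b ≠ 0)
    (ha : a = b * (2 + (m - 2) * b) ^ 2 / (2 * (2 + (m - 3) * b)))
    (hγ : γ = b / (2 + (m - 3) * b)) (x y : ℝ) :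
    (2 * b + (m - 2) * b ^ 2 - 2 * a) * (x * y) + 2 * a * ((x + 2) * (y + 2)) +
        b ^ 2 * (x ^ 2 + y ^ 2) =
      b * (2 + (m - 3) * b) *
        ((1 - γ) * (x + 2 + 2 * γ) * (y + 2 + 2 * γ) + γ * (x + y + 2 + 2 * γ) ^ 2) := by
  have hD' : 2 + b * (m - 3) ≠ 0 := by rwa [mul_comm]
  subst ha hγ
  field_simp
  ring

theorem quadForm_nonneg {m b a γ x y : ℝ} (hb : 0 < b) (hm : 0 ≤ 2 + (m - 4) * b)
    (ha : a = b * (2 + (m - 2) * b) ^ 2 / (2 * (2 + (m - 3) * b)))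
    (hγ : γ = b / (2 + (m - 3) * b)) (hx : -2 * γ - 2 ≤ x) (hy : -2 * γ - 2 ≤ y) :
    0 ≤ (2 * b + (m - 2) * b ^ 2 - 2 * a) * (x * y) + 2 * a * ((x + 2) * (y + 2)) +
        b ^ 2 * (x ^ 2 + y ^ 2) := by
  have hD : 0 < 2 + (m - 3) * b := by linarith
  have hγ_nonneg : 0 ≤ γ := hγ ▸ by positivity
  have hγ_le_one : γ ≤ 1 := hγ ▸ (div_le_one hD).mpr (by linarith)
  rw [quadForm_eq_of_gamma hD.ne' ha hγ]
  have hx' : 0 ≤ x + 2 + 2 * γ := by linarith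
  have hy' : 0 ≤ y + 2 + 2 * γ := by linarith
  exact mul_nonneg (by positivity) <| add_nonneg
    (mul_nonneg (mul_nonneg (sub_nonneg.mpr hγ_le_one) hx') hy')
    (mul_nonneg hγ_nonneg (sq_nonneg _))

theorem stmt_15_general (n : ℕ) (hn9 : 9 ≤ n) (b : ℝ)
    (hb0 : 0 < b)
    (a γ : ℝ)
    (ha : a = b * (2 + ((n : ℝ) - 2) * b) ^ 2 / (2 * (2 + ((n : ℝ) - 3) * b)))
    (hγ : γ = b / (2 + ((n : ℝ) - 3) * b))
    (x y : ℝ) (hx : x ≥ -2 * γ - 2) (hy : y ≥ -2 * γ - 2) :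
    (2 * b + ((n : ℝ) - 2) * b ^ 2 - 2 * a) * (x * y) +
        2 * a * ((x + 2) * (y + 2)) + b ^ 2 * (x ^ 2 + y ^ 2) ≥ 0 := by
  have hn : (9 : ℝ) ≤ n := by exact_mod_cast hn9
  have hm : 0 ≤ 2 + ((n : ℝ) - 4) * b := by nlinarith
  exact quadForm_nonneg hb0 hm ha hγ hx hy

/-- for `9 ≤ n ≤ 11`, `0 < b ≤ 1/(2n+2)`,
`a = b(2+(n-2)b)²/(2(2+(n-3)b))` and `γ = b/(2+(n-3)b)`, the function
`f(x,y) = (2b+(n-2)b²-2a)xy + 2a(x+2)(y+2) + b²(x²+y²)` is nonnegative on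
`{(x,y) : x ≥ -2γ-2, y ≥ -2γ-2}`. -/
theorem stmt_15 (n : ℕ) (hn9 : 9 ≤ n) (hn11 : n ≤ 11) (b : ℝ)
    (hb0 : 0 < b) (hb : b ≤ 1 / (2 * (n : ℝ) + 2))
    (a γ : ℝ)
    (ha : a = b * (2 + ((n : ℝ) - 2) * b) ^ 2 / (2 * (2 + ((n : ℝ) - 3) * b)))
    (hγ : γ = b / (2 + ((n : ℝ) - 3) * b))
    (x y : ℝ) (hx : x ≥ -2 * γ - 2) (hy : y ≥ -2 * γ - 2) :
    (2 * b + ((n : ℝ) - 2) * b ^ 2 - 2 * a) * (x * y) +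
        2 * a * ((x + 2) * (y + 2)) + b ^ 2 * (x ^ 2 + y ^ 2) ≥ 0 :=
  stmt_15_general n hn9 b hb0 a γ ha hγ x y hx hy
end

section
/- Let n ≥ 5 and let R be a weakly PIC algebraic curvature tensor on ℝⁿ. Then for every unit vector e in ℝⁿ, 2·Ric(R)(e,e) ≤ scal(R). -/
open scoped RealInnerProductSpace

noncomputable section

/-- Euclidean `n`-space. -/
abbrev En (n : ℕ) := EuclideanSpace ℝ (Fin n)

/-- Quadrilinear-form-valued objects (curvature-type tensors), given by their values. -/
abbrev Curv4 (n : ℕ) := En n → En n → En n → En n → ℝ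

/-- Bilinear-form-valued objects, given by their values. -/
abbrev Bil (n : ℕ) := En n → En n → ℝ

/-- The standard orthonormal basis vectors of `En n`. -/
def stdB (n : ℕ) (i : Fin n) : En n := EuclideanSpace.single i 1

/-- `R : Curv4 n` is multilinear, i.e. is the evaluation of a quadrilinear map. -/
def IsMultilinear4 {n : ℕ} (R : Curv4 n) : Prop :=
  ∃ L : En n →ₗ[ℝ] En n →ₗ[ℝ] En n →ₗ[ℝ] En n →ₗ[ℝ] ℝ,
    ∀ x y z w, R x y z w = L x y z w

/-- `R` is an algebraic curvature tensor: a quadrilinear form which is antisymmetric in the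
first two arguments, symmetric under exchange of the two pairs, and satisfies the first
Bianchi identity. -/
def IsAlgCurv {n : ℕ} (R : Curv4 n) : Prop :=
  IsMultilinear4 R ∧
  (∀ x y z w, R x y z w = -R y x z w) ∧
  (∀ x y z w, R x y z w = R z w x y) ∧
  (∀ x y z w, R x y z w + R y z x w + R z x y w = 0)

/-- The Ricci curvature `Ric(R)(x,z) = ∑ₚ R(x,eₚ,z,eₚ)`. -/
def ric {n : ℕ} (R : Curv4 n) : Bil n :=
  fun x z => ∑ p, R x (stdB n p) z (stdB n p)

/-- The scalar curvature `scal(R) = ∑ᵢ Ric(R)(eᵢ,eᵢ)`. -/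
def scal {n : ℕ} (R : Curv4 n) : ℝ :=
  ∑ i, ric R (stdB n i) (stdB n i)

/-- The identity (the standard inner product) as a bilinear form. -/
def idB (n : ℕ) : Bil n := fun x z => ⟪x, z⟫

/-- The trace-free Ricci tensor `Ric₀(R) = Ric(R) - (scal(R)/n)·id`. -/
def ric0 {n : ℕ} (R : Curv4 n) : Bil n :=
  fun x z => ric R x z - scal R / n * ⟪x, z⟫

/-- The square of a bilinear form, viewed as a symmetric endomorphism:
`B²(x,z) = ∑ₚ B(x,eₚ)·B(eₚ,z)`. -/
def bilSq {n : ℕ} (B : Bil n) : Bil n :=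
  fun x z => ∑ p, B x (stdB n p) * B (stdB n p) z

/-- The squared Frobenius norm `|B|² = tr(B²)` of a bilinear form. -/
def bilNormSq {n : ℕ} (B : Bil n) : ℝ :=
  ∑ i, bilSq B (stdB n i) (stdB n i)

/-- The Kulkarni–Nomizu product of two bilinear forms:
`(A ∧ B)(x,y,z,w) = A(x,z)B(y,w) - A(x,w)B(y,z) - A(y,z)B(x,w) + A(y,w)B(x,z)`. -/
def KN {n : ℕ} (A B : Bil n) : Curv4 n :=
  fun x y z w => A x z * B y w - A x w * B y z - A y z * B x w + A y w * B x z

/-- Böhm–Wilking's error term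
`D_{a,b}(R) = (2b+(n-2)b²-2a)·Ric₀∧Ric₀ + 2a·Ric∧Ric + 2b²·Ric₀²∧id
  + ((nb²(1-2b)-2(a-b)(1-2b+nb²))/(n(1+2(n-1)a)))·|Ric₀|²·id∧id`. -/
def Dab {n : ℕ} (a b : ℝ) (R : Curv4 n) : Curv4 n :=
  fun x y z w =>
    (2 * b + ((n : ℝ) - 2) * b ^ 2 - 2 * a) * KN (ric0 R) (ric0 R) x y z w +
      2 * a * KN (ric R) (ric R) x y z w +
      2 * b ^ 2 * KN (bilSq (ric0 R)) (idB n) x y z w +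
      ((n : ℝ) * b ^ 2 * (1 - 2 * b) - 2 * (a - b) * (1 - 2 * b + (n : ℝ) * b ^ 2)) /
          ((n : ℝ) * (1 + 2 * ((n : ℝ) - 1) * a)) * bilNormSq (ric0 R) *
        KN (idB n) (idB n) x y z w

/-- Böhm–Wilking's linear map
`l_{a,b}(R) = R + b·Ric(R)∧id + (1/n)(a-b)·scal(R)·id∧id`. -/
def lab {n : ℕ} (a b : ℝ) (R : Curv4 n) : Curv4 n :=
  fun x y z w =>
    R x y z w + b * KN (ric R) (idB n) x y z w +
      1 / (n : ℝ) * (a - b) * scal R * KN (idB n) (idB n) x y z w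

end

/-!
Extend `e` to an orthonormal basis `(bᵢ)` with `b₀ = e` and let `Kᵢⱼ = R(bᵢ, bⱼ, bᵢ, bⱼ)`. Then
`scal R - 2 Ric(e, e) = ∑_{i, j ≠ 0} Kᵢⱼ`. Adding the weak PIC inequalities for the frames
`(e₁, e₂, e₃, e₄)` and `(e₁, e₂, e₄, e₃)` gives `Kᵢₖ + Kᵢₗ + Kⱼₖ + Kⱼₗ ≥ 0` for distinct
`i, j, k, l`; summing over the three ways of splitting four indices into two pairs, the total of
`K` over any four indices is nonnegative. Deleting one point at a time and averaging, the same
holds over any set of at least four indices, here the `n - 1 ≥ 4` indices other than `0`.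
-/

open Finset

lemma OrthonormalBasis.sum_apply_self_eq {ι κ E : Type*} [Fintype ι] [Fintype κ]
    [NormedAddCommGroup E] [InnerProductSpace ℝ E] (B : E →ₗ[ℝ] E →ₗ[ℝ] ℝ)
    (b : OrthonormalBasis ι ℝ E) (u : OrthonormalBasis κ ℝ E) :
    ∑ p, B (b p) (b p) = ∑ i, B (u i) (u i) := by
  calc ∑ p, B (b p) (b p) = ∑ p, ∑ i, ⟪u i, b p⟫ * B (u i) (b p) := by
        refine sum_congr rfl fun p _ => ?_
        nth_rw 1 [← u.sum_repr' (b p)]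
        simp only [map_sum, map_smul, LinearMap.sum_apply, LinearMap.smul_apply, smul_eq_mul]
    _ = ∑ i, B (u i) (∑ p, ⟪b p, u i⟫ • b p) := by
        rw [sum_comm]
        simp only [map_sum, map_smul, smul_eq_mul, real_inner_comm]
    _ = ∑ i, B (u i) (u i) := by simp only [b.sum_repr']

lemma exists_orthonormalBasis_apply_eq {ι E : Type*} [Fintype ι]
    [NormedAddCommGroup E] [InnerProductSpace ℝ E] [FiniteDimensional ℝ E]
    (hcard : Module.finrank ℝ E = Fintype.card ι) (i : ι) {e : E} (he : ‖e‖ = 1) :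
    ∃ b : OrthonormalBasis ι ℝ E, b i = e := by
  have hsingle : Orthonormal ℝ (Set.domRestrict {i} fun _ => e) := by
    refine ⟨fun _ => he, fun j k hjk => absurd (Subtype.ext (j.2.trans k.2.symm)) hjk⟩
  obtain ⟨b, hb⟩ := hsingle.exists_orthonormalBasis_extension_of_card_eq hcard
  exact ⟨b, hb i rfl⟩

section DoubleSums

variable {α : Type*} (K : α → α → ℝ)

lemma sum_sum_erase_erase [DecidableEq α] {S : Finset α} {x : α} (hx : x ∈ S) :
    ∑ i ∈ S.erase x, ∑ j ∈ S.erase x, K i j =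
      ∑ i ∈ S, ∑ j ∈ S, K i j - ∑ j ∈ S, K x j - ∑ i ∈ S, K i x + K x x := by
  simp only [sum_erase_eq_sub hx, sum_sub_distrib]
  ring

lemma sum_sum_sum_erase_erase [DecidableEq α] (S : Finset α) :
    ∑ x ∈ S, ∑ i ∈ S.erase x, ∑ j ∈ S.erase x, K i j =
      (S.card - 2 : ℝ) * ∑ i ∈ S, ∑ j ∈ S, K i j + ∑ x ∈ S, K x x := by
  rw [sum_congr rfl fun x hx => sum_sum_erase_erase K hx]
  simp only [sum_add_distrib, sum_sub_distrib, sum_const, nsmul_eq_mul]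
  rw [sum_comm (s := S) (t := S) (f := fun i x => K i x)]
  ring

lemma sum_sum_nonneg_of_card_eq_four (hdiag : ∀ i, K i i = 0)
    (hcross : ∀ f : Fin 4 → α, Function.Injective f →
      0 ≤ K (f 0) (f 2) + K (f 0) (f 3) + K (f 1) (f 2) + K (f 1) (f 3))
    {T : Finset α} (hT : T.card = 4) : 0 ≤ ∑ i ∈ T, ∑ j ∈ T, K i j := by
  let e : Fin 4 ≃ T := (finCongr hT.symm).trans T.equivFin.symm
  let f : Fin 4 → α := fun p => e p
  have hf : Function.Injective f := Subtype.val_injective.comp e.injective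
  have reindex (g : α → ℝ) : ∑ i ∈ T, g i = ∑ p, g (f p) := by
    rw [← sum_coe_sort T, ← e.sum_comp]
  have hsum : ∑ i ∈ T, ∑ j ∈ T, K i j = ∑ p, ∑ q, K (f p) (f q) := by
    simp only [reindex]
  have cross (σ : Fin 4 → Fin 4) (hσ : Function.Injective σ) :=
    hcross (f ∘ σ) (hf.comp hσ)
  -- The splittings `{0,1}|{2,3}`, `{0,2}|{1,3}`, `{0,3}|{1,2}`, each taken in both orders,
  -- count every off-diagonal entry of `K` exactly twice.
  have h₁ := cross ![0, 1, 2, 3] (by decide)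
  have h₂ := cross ![2, 3, 0, 1] (by decide)
  have h₃ := cross ![0, 2, 1, 3] (by decide)
  have h₄ := cross ![1, 3, 0, 2] (by decide)
  have h₅ := cross ![0, 3, 1, 2] (by decide)
  have h₆ := cross ![1, 2, 0, 3] (by decide)
  simp only [Function.comp_apply, Matrix.cons_val] at h₁ h₂ h₃ h₄ h₅ h₆
  simp only [hsum, Fin.sum_univ_four, hdiag]
  linarith

lemma sum_sum_nonneg_of_four_le_card [DecidableEq α] (hdiag : ∀ i, K i i = 0)
    (hfour : ∀ T : Finset α, T.card = 4 → 0 ≤ ∑ i ∈ T, ∑ j ∈ T, K i j)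
    {S : Finset α} (hS : 4 ≤ S.card) : 0 ≤ ∑ i ∈ S, ∑ j ∈ S, K i j := by
  obtain ⟨k, hk⟩ := Nat.exists_eq_add_of_le' hS
  induction k generalizing S with
  | zero => exact hfour S hk
  | succ k ih =>
    have herase : ∀ x ∈ S, 0 ≤ ∑ i ∈ S.erase x, ∑ j ∈ S.erase x, K i j := fun x hx =>
      ih (by rw [card_erase_of_mem hx]; omega) (by rw [card_erase_of_mem hx]; omega)
    have hcard : (0 : ℝ) < S.card - 2 := by rw [hk]; push_cast; linarith
    have haverage := sum_sum_sum_erase_erase K S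
    simp only [hdiag, sum_const_zero, add_zero] at haverage
    nlinarith [sum_nonneg herase]

end DoubleSums

def WeaklyPIC {n : ℕ} (R : Curv4 n) : Prop :=
  ∀ e₁ e₂ e₃ e₄ : En n, Orthonormal ℝ ![e₁, e₂, e₃, e₄] →
    0 ≤ R e₁ e₃ e₁ e₃ + R e₁ e₄ e₁ e₄ + R e₂ e₃ e₂ e₃ + R e₂ e₄ e₂ e₄ - 2 * R e₁ e₂ e₃ e₄

variable {n : ℕ} {R : Curv4 n}

lemma IsMultilinear4.ric_eq_sum {ι : Type*} [Fintype ι] (hR : IsMultilinear4 R)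
    (b : OrthonormalBasis ι ℝ (En n)) (x z : En n) :
    ric R x z = ∑ p, R x (b p) z (b p) := by
  obtain ⟨L, hL⟩ := hR
  have := b.sum_apply_self_eq ((L x).flip z) (EuclideanSpace.basisFun (Fin n) ℝ)
  simp only [ric, hL, stdB]
  simpa [EuclideanSpace.basisFun_apply] using this.symm

namespace IsAlgCurv

lemma apply_swap_right (hR : IsAlgCurv R) (x y z w : En n) : R x y w z = -R x y z w := by
  rw [hR.2.2.1 x y w z, hR.2.1 w z x y, ← hR.2.2.1 x y z w]

lemma apply_self_left (hR : IsAlgCurv R) (x z w : En n) : R x x z w = 0 := by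
  linarith [hR.2.1 x x z w]

lemma apply_swap_swap (hR : IsAlgCurv R) (x y z w : En n) : R y x w z = R x y z w := by
  rw [hR.2.1 y x w z, hR.apply_swap_right, neg_neg]

lemma scal_eq_sum {ι : Type*} [Fintype ι] (hR : IsAlgCurv R) (b : OrthonormalBasis ι ℝ (En n)) :
    scal R = ∑ i, ∑ j, R (b i) (b j) (b i) (b j) := by
  calc scal R = ∑ i, ∑ p, R (stdB n i) (b p) (stdB n i) (b p) := by
        simp only [scal, hR.1.ric_eq_sum b]
    _ = ∑ p, ric R (b p) (b p) := by
        rw [sum_comm]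
        simp only [ric, hR.apply_swap_swap]
    _ = ∑ i, ∑ j, R (b i) (b j) (b i) (b j) := by
        simp only [hR.1.ric_eq_sum b]

end IsAlgCurv

lemma WeaklyPIC.cross_nonneg (hPIC : WeaklyPIC R) (hR : IsAlgCurv R) {v : Fin 4 → En n}
    (hv : Orthonormal ℝ v) :
    0 ≤ R (v 0) (v 2) (v 0) (v 2) + R (v 0) (v 3) (v 0) (v 3) +
      R (v 1) (v 2) (v 1) (v 2) + R (v 1) (v 3) (v 1) (v 3) := by
  have h₁ := hPIC (v 0) (v 1) (v 2) (v 3) (by convert hv; ext i; fin_cases i <;> rfl)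
  have h₂ := hPIC (v 0) (v 1) (v 3) (v 2)
    (by convert hv.comp ![0, 1, 3, 2] (by decide); ext i; fin_cases i <;> rfl)
  rw [hR.apply_swap_right (v 0) (v 1) (v 2) (v 3)] at h₂
  linarith

/-- for `n ≥ 5`, if `R` is a weakly PIC algebraic curvature tensor on `ℝⁿ`,
then `2·Ric(R)(e,e) ≤ scal(R)` for every unit vector `e`. -/
theorem stmt_17 (n : ℕ) (hn : 5 ≤ n) (R : Curv4 n) (hR : IsAlgCurv R)
    (hPIC : ∀ e₁ e₂ e₃ e₄ : En n, Orthonormal ℝ ![e₁, e₂, e₃, e₄] →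
      0 ≤ R e₁ e₃ e₁ e₃ + R e₁ e₄ e₁ e₄ + R e₂ e₃ e₂ e₃ + R e₂ e₄ e₂ e₄ -
        2 * R e₁ e₂ e₃ e₄) :
    ∀ e : En n, ‖e‖ = 1 → 2 * ric R e e ≤ scal R := by
  intro e he
  have : NeZero n := ⟨by omega⟩
  obtain ⟨b, rfl⟩ := exists_orthonormalBasis_apply_eq (by simp) (0 : Fin n) he
  set K : Fin n → Fin n → ℝ := fun i j => R (b i) (b j) (b i) (b j)
  have hdiag : ∀ i, K i i = 0 := fun i => hR.apply_self_left _ _ _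
  have hsymm : ∀ i j, K i j = K j i := fun i j => (hR.apply_swap_swap _ _ _ _).symm
  have hcard : 4 ≤ (univ.erase (0 : Fin n)).card := by
    rw [card_erase_of_mem (mem_univ _), card_univ, Fintype.card_fin]; omega
  have hrest : 0 ≤ ∑ i ∈ univ.erase 0, ∑ j ∈ univ.erase 0, K i j :=
    sum_sum_nonneg_of_four_le_card K hdiag (fun _ hT => sum_sum_nonneg_of_card_eq_four K hdiag
      (fun _ hf => WeaklyPIC.cross_nonneg hPIC hR (b.orthonormal.comp _ hf)) hT) hcard
  rw [sum_sum_erase_erase K (mem_univ 0), hdiag, add_zero] at hrest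
  simp only [hsymm _ 0] at hrest
  rw [hR.1.ric_eq_sum b, hR.scal_eq_sum b]
  linarith
end

section
/- Let n ≥ 5 and let S be a weakly PIC algebraic curvature tensor on ℝⁿ. Then for every orthonormal basis {e₁, …, eₙ} of ℝⁿ, (n-1)(n-4)·S_{1212} + (n-5)·∑_{p=3}ⁿ (S_{1p1p} + S_{2p2p}) + scal(S) ≥ 0. -/
open scoped RealInnerProductSpace

section AuxiliaryLemmas

lemma sum_coord_mul_coord {n : ℕ} (e : OrthonormalBasis (Fin n) ℝ (En n)) (k l : Fin n) :
    ∑ i, e i k * e i l = if k = l then 1 else 0 := by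
  have h := e.sum_inner_mul_inner (stdB n k) (stdB n l)
  simp only [stdB, EuclideanSpace.inner_single_left, EuclideanSpace.inner_single_right,
    EuclideanSpace.single_apply, map_one, map_zero, one_mul,
    RCLike.conj_to_real] at h
  rw [h]
  simp [eq_comm]

lemma trace_indep {n : ℕ} (M : En n →ₗ[ℝ] En n →ₗ[ℝ] ℝ)
    (e : OrthonormalBasis (Fin n) ℝ (En n)) :
    ∑ i, M (e i) (e i) = ∑ i, M (stdB n i) (stdB n i) := by
  have hx : ∀ x : En n, x = ∑ k, x k • stdB n k := by
    intro x
    have := (EuclideanSpace.basisFun (Fin n) ℝ).sum_repr x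
    simp only [EuclideanSpace.basisFun_repr, EuclideanSpace.basisFun_apply] at this
    simpa [stdB] using this.symm
  calc ∑ i, M (e i) (e i)
      = ∑ i, ∑ k, ∑ l, (e i k * e i l) * M (stdB n l) (stdB n k) := by
        refine Finset.sum_congr rfl fun i _ => ?_
        conv_lhs => rw [hx (e i)]
        simp only [map_sum, map_smul, LinearMap.coe_sum, Finset.sum_apply,
          LinearMap.smul_apply, smul_eq_mul, Finset.mul_sum]
        refine Finset.sum_congr rfl fun k _ => Finset.sum_congr rfl fun l _ => by ring
    _ = ∑ k, ∑ l, (∑ i, e i k * e i l) * M (stdB n l) (stdB n k) := by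
        rw [Finset.sum_comm]
        refine Finset.sum_congr rfl fun k _ => ?_
        rw [Finset.sum_comm]
        exact Finset.sum_congr rfl fun l _ => (Finset.sum_mul _ _ _).symm
    _ = ∑ i, M (stdB n i) (stdB n i) := by
        simp only [sum_coord_mul_coord e, ite_mul, one_mul, zero_mul]
        simp [Finset.sum_ite_eq]

lemma ric_basis {n : ℕ} (S : Curv4 n) (L : En n →ₗ[ℝ] En n →ₗ[ℝ] En n →ₗ[ℝ] En n →ₗ[ℝ] ℝ)
    (hL : ∀ x y z w, S x y z w = L x y z w) (e : OrthonormalBasis (Fin n) ℝ (En n))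
    (x z : En n) : ric S x z = ∑ p, S x (e p) z (e p) := by
  set M : En n →ₗ[ℝ] En n →ₗ[ℝ] ℝ :=
    LinearMap.mk₂ ℝ (fun u v => L x u z v)
      (fun u u' v => by simp)
      (fun c u v => by simp)
      (fun u v v' => by simp)
      (fun c u v => by simp) with hM
  have h := trace_indep M e
  simp only [hM, LinearMap.mk₂_apply] at h
  simp only [ric, hL]
  exact h.symm

lemma scal_basis {n : ℕ} (S : Curv4 n) (L : En n →ₗ[ℝ] En n →ₗ[ℝ] En n →ₗ[ℝ] En n →ₗ[ℝ] ℝ)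
    (hL : ∀ x y z w, S x y z w = L x y z w) (e : OrthonormalBasis (Fin n) ℝ (En n)) :
    scal S = ∑ i, ∑ p, S (e i) (e p) (e i) (e p) := by
  set N : En n →ₗ[ℝ] En n →ₗ[ℝ] ℝ :=
    LinearMap.mk₂ ℝ (fun x z => ∑ p, L x (stdB n p) z (stdB n p))
      (fun u u' v => by simp [Finset.sum_add_distrib])
      (fun c u v => by simp [Finset.mul_sum])
      (fun u v v' => by simp [Finset.sum_add_distrib])
      (fun c u v => by simp [Finset.mul_sum]) with hN
  have h := trace_indep N e
  simp only [hN, LinearMap.mk₂_apply] at h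
  have hsc : scal S = ∑ i, N (stdB n i) (stdB n i) := by
    simp only [scal, ric, hL, hN, LinearMap.mk₂_apply]
  rw [hsc]
  simp only [hN, LinearMap.mk₂_apply]
  rw [← h]
  refine Finset.sum_congr rfl fun i _ => ?_
  rw [← ric_basis S L hL e (e i) (e i)]
  simp [ric, hL]

lemma frame_on {n : ℕ} (e : OrthonormalBasis (Fin n) ℝ (En n)) {i j k l : Fin n}
    (hij : i ≠ j) (hik : i ≠ k) (hil : i ≠ l) (hjk : j ≠ k) (hjl : j ≠ l) (hkl : k ≠ l) :
    Orthonormal ℝ ![e i, e j, e k, e l] := by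
  have h : ![e i, e j, e k, e l] = e ∘ ![i, j, k, l] := by
    funext a; fin_cases a <;> rfl
  rw [h]
  apply e.orthonormal.comp
  intro a b hab
  fin_cases a <;> fin_cases b <;> simp_all

lemma orthonormal_negLast {n : ℕ} {a b c d : En n} (h : Orthonormal ℝ ![a, b, c, d]) :
    Orthonormal ℝ ![a, b, c, -d] := by
  rw [orthonormal_iff_ite] at h ⊢
  intro i j
  have hij := h i j
  fin_cases i <;> fin_cases j <;>
    simp_all [inner_neg_left, inner_neg_right]

lemma picsum {n : ℕ} (S : Curv4 n) (L : En n →ₗ[ℝ] En n →ₗ[ℝ] En n →ₗ[ℝ] En n →ₗ[ℝ] ℝ)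
    (hL : ∀ x y z w, S x y z w = L x y z w)
    (hPIC : ∀ e₁ e₂ e₃ e₄ : En n, Orthonormal ℝ ![e₁, e₂, e₃, e₄] →
      0 ≤ S e₁ e₃ e₁ e₃ + S e₁ e₄ e₁ e₄ + S e₂ e₃ e₂ e₃ + S e₂ e₄ e₂ e₄ -
        2 * S e₁ e₂ e₃ e₄)
    (a b c d : En n) (h : Orthonormal ℝ ![a, b, c, d]) :
    0 ≤ S a c a c + S a d a d + S b c b c + S b d b d := by
  have p1 := hPIC a b c d h
  have p2 := hPIC a b c (-d) (orthonormal_negLast h)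
  simp only [hL] at p1 p2 ⊢
  simp only [map_neg, LinearMap.neg_apply, neg_neg] at p2
  linarith

end AuxiliaryLemmas


/-- for `n ≥ 5`, if `S` is a weakly PIC algebraic curvature tensor on `ℝⁿ`,
then for every orthonormal basis `{e₁,…,eₙ}`,
`(n-1)(n-4)·S₁₂₁₂ + (n-5)·∑_{p=3}ⁿ (S₁ₚ₁ₚ + S₂ₚ₂ₚ) + scal(S) ≥ 0`. -/
theorem stmt_18 (n : ℕ) (hn : 5 ≤ n) (S : Curv4 n) (hS : IsAlgCurv S)
    (hPIC : ∀ e₁ e₂ e₃ e₄ : En n, Orthonormal ℝ ![e₁, e₂, e₃, e₄] →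
      0 ≤ S e₁ e₃ e₁ e₃ + S e₁ e₄ e₁ e₄ + S e₂ e₃ e₂ e₃ + S e₂ e₄ e₂ e₄ -
        2 * S e₁ e₂ e₃ e₄) :
    ∀ e : OrthonormalBasis (Fin n) ℝ (En n),
      ((n : ℝ) - 1) * ((n : ℝ) - 4) *
          S (e ⟨0, by omega⟩) (e ⟨1, by omega⟩) (e ⟨0, by omega⟩) (e ⟨1, by omega⟩) +
        ((n : ℝ) - 5) *
          ∑ p ∈ Finset.univ.filter (fun p : Fin n => 2 ≤ (p : ℕ)),
            (S (e ⟨0, by omega⟩) (e p) (e ⟨0, by omega⟩) (e p) +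
              S (e ⟨1, by omega⟩) (e p) (e ⟨1, by omega⟩) (e p)) +
        scal S ≥ 0 := by
  intro e
  obtain ⟨⟨L, hL⟩, hanti, hpair, -⟩ := hS
  set z0 : Fin n := ⟨0, by omega⟩ with hz0def
  set z1 : Fin n := ⟨1, by omega⟩ with hz1def
  obtain ⟨r, hrdef⟩ : ∃ r : Fin n → Fin n → ℝ, ∀ i j, r i j = S (e i) (e j) (e i) (e j) :=
    ⟨_, fun _ _ => rfl⟩
  show 0 ≤ ((n : ℝ) - 1) * ((n : ℝ) - 4) * S (e z0) (e z1) (e z0) (e z1) +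
      ((n : ℝ) - 5) * ∑ p ∈ Finset.univ.filter (fun p : Fin n => 2 ≤ (p : ℕ)),
        (S (e z0) (e p) (e z0) (e p) + S (e z1) (e p) (e z1) (e p)) + scal S
  simp only [← hrdef]
  set P := Finset.univ.filter (fun p : Fin n => 2 ≤ (p : ℕ)) with hP
  have hv0 : (z0 : ℕ) = 0 := by rw [hz0def]
  have hv1 : (z1 : ℕ) = 1 := by rw [hz1def]
  have hz01 : z0 ≠ z1 := fun h => by rw [Fin.ext_iff, hv0, hv1] at h; omega
  have hmem : ∀ p : Fin n, p ∈ P ↔ 2 ≤ (p : ℕ) := fun p => by simp [hP]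
  -- basic symmetries
  have hrdiag : ∀ i, r i i = 0 := fun i => by
    have h := hanti (e i) (e i) (e i) (e i)
    rw [hrdef]; linarith
  have hrsym : ∀ i j, r i j = r j i := fun i j => by
    have h1 := hanti (e j) (e i) (e j) (e i)
    have h2 := hpair (e i) (e j) (e j) (e i)
    have h3 := hanti (e j) (e i) (e i) (e j)
    rw [hrdef, hrdef]; linarith
  -- the key inequality from weak PIC
  have hkey : ∀ p ∈ P, ∀ q ∈ P, p ≠ q →
      0 ≤ 2 * r z0 z1 + (r z0 p + r z1 p) + (r z0 q + r z1 q) + 2 * r p q := by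
    intro p hp q hq hpq
    have hp2 : 2 ≤ (p : ℕ) := (hmem p).mp hp
    have hq2 : 2 ≤ (q : ℕ) := (hmem q).mp hq
    have h0p : z0 ≠ p := fun h => by rw [← h, hv0] at hp2; omega
    have h1p : z1 ≠ p := fun h => by rw [← h, hv1] at hp2; omega
    have h0q : z0 ≠ q := fun h => by rw [← h, hv0] at hq2; omega
    have h1q : z1 ≠ q := fun h => by rw [← h, hv1] at hq2; omega
    have T1 := picsum S L hL hPIC (e z0) (e p) (e z1) (e q)
      (frame_on e h0p hz01 h0q (Ne.symm h1p) hpq h1q)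
    have T2 := picsum S L hL hPIC (e z1) (e p) (e z0) (e q)
      (frame_on e h1p (Ne.symm hz01) h1q (Ne.symm h0p) hpq h0q)
    simp only [← hrdef] at T1 T2
    have s1 := hrsym p z1
    have s2 := hrsym p z0
    have s3 := hrsym z1 z0
    linarith
  -- splitting sums over the whole index set
  have h1P : z1 ∉ P := by
    intro h; have := (hmem z1).mp h; omega
  have h0P : z0 ∉ insert z1 P := by
    intro h
    rcases Finset.mem_insert.mp h with h | h
    · exact hz01 h
    · have := (hmem z0).mp h; omega
  have huniv : insert z0 (insert z1 P) = (Finset.univ : Finset (Fin n)) := by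
    ext p
    simp only [Finset.mem_insert, hmem, Finset.mem_univ, iff_true]
    rw [Fin.ext_iff, Fin.ext_iff, hv0, hv1]
    omega
  have hsplit : ∀ f : Fin n → ℝ, ∑ i, f i = f z0 + f z1 + ∑ p ∈ P, f p := by
    intro f
    rw [← huniv, Finset.sum_insert h0P, Finset.sum_insert h1P]
    ring
  -- scalar curvature in the basis e
  have hscal2 : scal S = 2 * r z0 z1 + 2 * (∑ p ∈ P, (r z0 p + r z1 p)) +
      ∑ p ∈ P, ∑ q ∈ P, r p q := by
    have hscal1 : scal S = ∑ i, ∑ j, r i j := by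
      rw [scal_basis S L hL e]
      exact Finset.sum_congr rfl fun i _ => Finset.sum_congr rfl fun j _ => (hrdef i j).symm
    rw [hscal1, hsplit (fun i => ∑ j, r i j)]
    rw [hsplit (r z0), hsplit (r z1),
      show (∑ p ∈ P, ∑ j, r p j) = ∑ p ∈ P, (r p z0 + r p z1 + ∑ q ∈ P, r p q) from
        Finset.sum_congr rfl fun p _ => hsplit (r p)]
    simp only [Finset.sum_add_distrib]
    rw [show (∑ p ∈ P, r p z0) = ∑ p ∈ P, r z0 p from
        Finset.sum_congr rfl fun p _ => hrsym p z0,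
      show (∑ p ∈ P, r p z1) = ∑ p ∈ P, r z1 p from
        Finset.sum_congr rfl fun p _ => hrsym p z1,
      hrdiag z0, hrdiag z1, hrsym z1 z0]
    ring
  -- cardinality of P
  have hm : (P.card : ℝ) = (n : ℝ) - 2 := by
    have hPeq : P = Finset.univ \ {z0, z1} := by
      ext p
      simp only [hmem, Finset.mem_sdiff, Finset.mem_univ, true_and, Finset.mem_insert,
        Finset.mem_singleton]
      rw [Fin.ext_iff, Fin.ext_iff, hv0, hv1]
      omega
    have hcard : P.card = n - 2 := by
      rw [hPeq, Finset.card_sdiff_of_subset (Finset.subset_univ _), Finset.card_univ,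
        Finset.card_pair hz01, Fintype.card_fin]
    rw [hcard, Nat.cast_sub (by omega)]
    norm_num
  -- the nonnegative double sum
  have hApos : 0 ≤ ∑ p ∈ P, ∑ q ∈ P.erase p,
      (2 * r z0 z1 + (r z0 p + r z1 p) + (r z0 q + r z1 q) + 2 * r p q) :=
    Finset.sum_nonneg fun p hp => Finset.sum_nonneg fun q hq =>
      hkey p hp q (Finset.mem_of_mem_erase hq) (Ne.symm (Finset.ne_of_mem_erase hq))
  -- evaluate the double sum
  have hAval : (∑ p ∈ P, ∑ q ∈ P.erase p,
      (2 * r z0 z1 + (r z0 p + r z1 p) + (r z0 q + r z1 q) + 2 * r p q)) =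
      ((n : ℝ) - 2) * ((n : ℝ) - 3) * (2 * r z0 z1) +
        2 * ((n : ℝ) - 3) * (∑ p ∈ P, (r z0 p + r z1 p)) +
        2 * (∑ p ∈ P, ∑ q ∈ P, r p q) := by
    have hinner : ∀ p ∈ P, (∑ q ∈ P.erase p,
        (2 * r z0 z1 + (r z0 p + r z1 p) + (r z0 q + r z1 q) + 2 * r p q)) =
        ((n : ℝ) - 2) * (2 * r z0 z1 + (r z0 p + r z1 p)) +
          (∑ q ∈ P, (r z0 q + r z1 q)) + 2 * (∑ q ∈ P, r p q) -
          (2 * r z0 z1 + 2 * (r z0 p + r z1 p)) := by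
      intro p hp
      rw [Finset.sum_erase_eq_sub hp]
      simp only [Finset.sum_add_distrib, Finset.sum_const, nsmul_eq_mul, ← Finset.mul_sum]
      rw [hm, hrdiag p]
      ring
    rw [Finset.sum_congr rfl hinner]
    simp only [Finset.sum_sub_distrib, Finset.sum_add_distrib, Finset.sum_const,
      nsmul_eq_mul, ← Finset.mul_sum]
    rw [hm]
    ring
  rw [hscal2]
  rw [hAval] at hApos
  linarith
end

section
/- Let n ≥ 4 and let H be a symmetric bilinear form on ℝⁿ such that H(u,u) + H(v,v) > 0 for every pair of orthonormal vectors u, v in ℝⁿ (equivalently, the sum of the two smallest eigenvalues of H is positive). Then the algebraic curvature tensor H ∧ H lies in the interior of the cone C_PIC; that is, for every orthonormal four-frame {e₁,e₂,e₃,e₄} in ℝⁿ, (H∧H)_{1313} + (H∧H)_{1414} + (H∧H)_{2323} + (H∧H)_{2424} - 2(H∧H)_{1234} > 0. -/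
open scoped RealInnerProductSpace

/-- `H : Bil n` is bilinear, i.e. is the evaluation of a bilinear map. -/
def IsBilinear2 {n : ℕ} (H : Bil n) : Prop :=
  ∃ L : En n →ₗ[ℝ] En n →ₗ[ℝ] ℝ, ∀ x z, H x z = L x z

set_option maxHeartbeats 1000000 in
lemma pair_on {n : ℕ} {u v : En n} (h1 : ⟪u,u⟫ = 1) (h2 : ⟪v,v⟫ = 1)
    (h3 : ⟪u,v⟫ = 0) : Orthonormal ℝ ![u,v] := by
  rw [orthonormal_iff_ite]
  intro i j
  fin_cases i <;> fin_cases j <;> simp_all [real_inner_comm u v]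

lemma quad_key {A C B : ℝ} (hC : 0 < C)
    (h : ∀ c s : ℝ, c^2 + s^2 = 1 → 0 < A*c^2 + C*s^2 + 2*c*s*B) :
    B^2 < A*C := by
  set D := Real.sqrt (B^2 + C^2) with hDdef
  have hD2 : D^2 = B^2 + C^2 := Real.sq_sqrt (by positivity)
  have hDpos : 0 < D := Real.sqrt_pos.2 (by positivity)
  have hDne : D ≠ 0 := ne_of_gt hDpos
  have hcirc : (C/D)^2 + (-B/D)^2 = 1 := by
    field_simp
    linarith [hD2]
  have h1 := h (C/D) (-B/D) hcirc
  have heq : A*(C/D)^2 + C*(-B/D)^2 + 2*(C/D)*(-B/D)*B = C*(A*C - B^2)/D^2 := by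
    field_simp
    ring
  rw [heq] at h1
  have h2 := mul_pos h1 (pow_pos hDpos 2)
  rw [div_mul_cancel₀ _ (pow_ne_zero 2 hDne)] at h2
  nlinarith [h2, hC]

set_option maxHeartbeats 1000000 in
/-- for `n ≥ 4`, if `H` is a symmetric bilinear form on `ℝⁿ` with
`H(u,u) + H(v,v) > 0` for every orthonormal pair `u, v`, then `H ∧ H` lies in the
interior of `C_PIC`: for every orthonormal four-frame,
`(H∧H)₁₃₁₃ + (H∧H)₁₄₁₄ + (H∧H)₂₃₂₃ + (H∧H)₂₄₂₄ - 2(H∧H)₁₂₃₄ > 0`. -/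
theorem stmt_19 (n : ℕ) (hn : 4 ≤ n) (H : Bil n)
    (hbil : IsBilinear2 H) (hsymm : ∀ x z : En n, H x z = H z x)
    (hpos : ∀ u v : En n, Orthonormal ℝ ![u, v] → 0 < H u u + H v v) :
    ∀ e₁ e₂ e₃ e₄ : En n, Orthonormal ℝ ![e₁, e₂, e₃, e₄] →
      0 < KN H H e₁ e₃ e₁ e₃ + KN H H e₁ e₄ e₁ e₄ + KN H H e₂ e₃ e₂ e₃ +
          KN H H e₂ e₄ e₂ e₄ - 2 * KN H H e₁ e₂ e₃ e₄ := by
  obtain ⟨L, hL⟩ := hbil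
  have hs' : ∀ x z : En n, L x z = L z x := fun x z => by rw [← hL, ← hL, hsymm]
  intro e₁ e₂ e₃ e₄ hON
  rw [orthonormal_iff_ite] at hON
  have i11 : ⟪e₁,e₁⟫ = (1:ℝ) := by simpa using hON 0 0
  have i22 : ⟪e₂,e₂⟫ = (1:ℝ) := by simpa using hON 1 1
  have i33 : ⟪e₃,e₃⟫ = (1:ℝ) := by simpa using hON 2 2
  have i44 : ⟪e₄,e₄⟫ = (1:ℝ) := by simpa using hON 3 3
  have i12 : ⟪e₁,e₂⟫ = (0:ℝ) := by simpa using hON 0 1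
  have i13 : ⟪e₁,e₃⟫ = (0:ℝ) := by simpa using hON 0 2
  have i14 : ⟪e₁,e₄⟫ = (0:ℝ) := by simpa using hON 0 3
  have i23 : ⟪e₂,e₃⟫ = (0:ℝ) := by simpa using hON 1 2
  have i24 : ⟪e₂,e₄⟫ = (0:ℝ) := by simpa using hON 1 3
  have i34 : ⟪e₃,e₄⟫ = (0:ℝ) := by simpa using hON 2 3
  have i31 : ⟪e₃,e₁⟫ = (0:ℝ) := by rw [real_inner_comm]; exact i13
  have i41 : ⟪e₄,e₁⟫ = (0:ℝ) := by rw [real_inner_comm]; exact i14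
  have i32 : ⟪e₃,e₂⟫ = (0:ℝ) := by rw [real_inner_comm]; exact i23
  have i42 : ⟪e₄,e₂⟫ = (0:ℝ) := by rw [real_inner_comm]; exact i24
  have i43 : ⟪e₄,e₃⟫ = (0:ℝ) := by rw [real_inner_comm]; exact i34
  have hA : 0 < H e₁ e₁ + H e₂ e₂ := hpos _ _ (pair_on i11 i22 i12)
  have hC : 0 < H e₃ e₃ + H e₄ e₄ := hpos _ _ (pair_on i33 i44 i34)
  have claim : ∀ c s cψ sψ : ℝ, c^2 + s^2 = 1 → cψ^2 + sψ^2 = 1 →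
      0 < (H e₁ e₁ + H e₂ e₂) * c^2 + (H e₃ e₃ + H e₄ e₄) * s^2 +
        2*c*s*(cψ*(H e₁ e₃ + H e₂ e₄) + sψ*(H e₂ e₃ - H e₁ e₄)) := by
    intro c s cψ sψ hcs hψ
    set u : En n := c • e₁ + (s*cψ) • e₃ + (-(s*sψ)) • e₄ with hu
    set v : En n := c • e₂ + (s*sψ) • e₃ + (s*cψ) • e₄ with hv
    have huu : ⟪u,u⟫ = (1:ℝ) := by
      simp only [hu, inner_add_left, inner_add_right, real_inner_smul_left,
        real_inner_smul_right, i11, i13, i14, i31, i41, i33, i44, i34, i43]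
      nlinarith [hcs, hψ]
    have hvv : ⟪v,v⟫ = (1:ℝ) := by
      simp only [hv, inner_add_left, inner_add_right, real_inner_smul_left,
        real_inner_smul_right, i22, i23, i24, i32, i42, i33, i44, i34, i43]
      nlinarith [hcs, hψ]
    have huv : ⟪u,v⟫ = (0:ℝ) := by
      simp only [hu, hv, inner_add_left, inner_add_right, real_inner_smul_left,
        real_inner_smul_right, i12, i13, i14, i23, i24, i32, i42, i33, i44, i34, i43]
      ring
    have hval : H u u + H v v =
        (H e₁ e₁ + H e₂ e₂) * c^2 + (H e₃ e₃ + H e₄ e₄) * s^2 +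
          2*c*s*(cψ*(H e₁ e₃ + H e₂ e₄) + sψ*(H e₂ e₃ - H e₁ e₄)) := by
      simp only [hu, hv, hL, map_add, map_smul, LinearMap.add_apply,
        LinearMap.smul_apply, smul_eq_mul]
      rw [hs' e₃ e₁, hs' e₄ e₁, hs' e₃ e₂, hs' e₄ e₂, hs' e₄ e₃]
      linear_combination (s^2 * ((L e₃) e₃ + (L e₄) e₄)) * hψ
    rw [← hval]
    exact hpos u v (pair_on huu hvv huv)
  have key : (H e₁ e₃ + H e₂ e₄)^2 + (H e₂ e₃ - H e₁ e₄)^2 <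
      (H e₁ e₁ + H e₂ e₂) * (H e₃ e₃ + H e₄ e₄) := by
    obtain ⟨A, hAdef⟩ : ∃ x, x = H e₁ e₁ + H e₂ e₂ := ⟨_, rfl⟩
    obtain ⟨C, hCdef⟩ : ∃ x, x = H e₃ e₃ + H e₄ e₄ := ⟨_, rfl⟩
    obtain ⟨P, hPdef⟩ : ∃ x, x = H e₁ e₃ + H e₂ e₄ := ⟨_, rfl⟩
    obtain ⟨Q, hQdef⟩ : ∃ x, x = H e₂ e₃ - H e₁ e₄ := ⟨_, rfl⟩
    rw [← hAdef, ← hCdef, ← hPdef, ← hQdef]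
    rw [← hAdef] at hA
    rw [← hCdef] at hC
    simp only [← hAdef, ← hCdef, ← hPdef, ← hQdef] at claim
    by_cases h0 : P^2 + Q^2 = 0
    · have hP : P = 0 := by nlinarith [sq_nonneg P, sq_nonneg Q]
      have hQ : Q = 0 := by nlinarith [sq_nonneg P, sq_nonneg Q]
      rw [hP, hQ]
      simpa using mul_pos hA hC
    · have hPQnn : 0 ≤ P^2 + Q^2 := by positivity
      obtain ⟨B, hBdef⟩ : ∃ x, x = Real.sqrt (P^2 + Q^2) := ⟨_, rfl⟩
      have hB2 : B^2 = P^2 + Q^2 := by rw [hBdef]; exact Real.sq_sqrt hPQnn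
      have hBpos : 0 < B := by
        rw [hBdef]; exact Real.sqrt_pos.2 (lt_of_le_of_ne hPQnn (Ne.symm h0))
      have hBne : B ≠ 0 := ne_of_gt hBpos
      have hψ : (P/B)^2 + (Q/B)^2 = 1 := by
        field_simp
        linarith [hB2]
      have hcross : (P/B)*P + (Q/B)*Q = B := by
        field_simp
        linarith [hB2]
      have hq : ∀ c s : ℝ, c^2 + s^2 = 1 → 0 < A*c^2 + C*s^2 + 2*c*s*B := by
        intro c s hcs
        have h1 := claim c s (P/B) (Q/B) hcs hψ
        rw [hcross] at h1
        exact h1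
      have h2 := quad_key hC hq
      linarith [hB2, h2]
  simp only [KN]
  rw [hsymm e₃ e₁, hsymm e₄ e₁, hsymm e₃ e₂, hsymm e₄ e₂]
  nlinarith [key]
end
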